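/- Let U be a real M×l matrix and V a real N×l matrix, each with orthonormal columns. Then the matrices Vᵀ Aᵀ A V − (Uᵀ A V)ᵀ (Uᵀ A V) and Uᵀ A Aᵀ U − (Uᵀ A V)(Uᵀ A V)ᵀ are positive semidefinite; consequently, for every h ∈ ℝ^l, hᵀ (Vᵀ Aᵀ A V) h ≥ σ_min(Uᵀ A V)²·‖h‖² and hᵀ (Uᵀ A Aᵀ U) h ≥ σ_min(Uᵀ A V)²·‖h‖². -/

import Mathlib

open Matrix

noncomputable def euclNorm {ι : Type*} [Fintype ι] (v : ι → ℝ) : ℝ :=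
  Real.sqrt (∑ i, v i ^ 2)

def eLast (m : ℕ) : Fin m → ℝ := fun i => if (i : ℕ) = m - 1 then 1 else 0

def HarmonicPencil {m : ℕ} (B : Matrix (Fin m) (Fin m) ℝ) (β θ : ℝ)
    (s w : Fin m → ℝ) : Prop :=
  θ • B.mulVec w = (B * Bᵀ + β ^ 2 • vecMulVec (eLast m) (eLast m)).mulVec s ∧
  θ • Bᵀ.mulVec s = (Bᵀ * B).mulVec w

noncomputable def specNorm {m n : Type*} [Fintype m] [Fintype n] [DecidableEq n]
    (A : Matrix m n ℝ) : ℝ :=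
  ‖LinearMap.toContinuousLinearMap (Matrix.toEuclideanLin A)‖

noncomputable def sep {n : Type*} [Fintype n] [DecidableEq n] (a : ℝ) (G : Matrix n n ℝ) : ℝ :=
  sInf {r | ∃ x : n → ℝ, euclNorm x = 1 ∧ r = euclNorm ((a • (1 : Matrix n n ℝ) - G).mulVec x)}

noncomputable def sigmaMin {m n : Type*} [Fintype m] [Fintype n] (C : Matrix m n ℝ) : ℝ :=
  sSup {c | 0 ≤ c ∧ ∀ h, c * euclNorm h ≤ euclNorm (C.mulVec h)}

noncomputable def sinAngleVec {ι : Type*} [Fintype ι] (x y : ι → ℝ) : ℝ :=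
  Real.sqrt (1 - (x ⬝ᵥ y) ^ 2 / (euclNorm x ^ 2 * euclNorm y ^ 2))

noncomputable def toE {ι : Type*} (v : ι → ℝ) : EuclideanSpace ℝ ι :=
  (WithLp.equiv 2 (ι → ℝ)).symm v

noncomputable def ofE {ι : Type*} (v : EuclideanSpace ℝ ι) : ι → ℝ :=
  WithLp.equiv 2 (ι → ℝ) v

noncomputable def sinAngleSub {ι : Type*} [Fintype ι] (x : EuclideanSpace ℝ ι)
    (E : Submodule ℝ (EuclideanSpace ℝ ι)) : ℝ :=
  ‖x - (Submodule.orthogonalProjectionOnto E x : EuclideanSpace ℝ ι)‖ / ‖x‖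

def Atilde {M N : ℕ} (A : Matrix (Fin M) (Fin N) ℝ) :
    Matrix (Fin M ⊕ Fin N) (Fin M ⊕ Fin N) ℝ :=
  fromBlocks 0 A Aᵀ 0

def Btilde {m : ℕ} (B : Matrix (Fin m) (Fin m) ℝ) :
    Matrix (Fin m ⊕ Fin m) (Fin m ⊕ Fin m) ℝ :=
  fromBlocks 0 B Bᵀ 0

noncomputable def Ctilde {m : ℕ} (B : Matrix (Fin m) (Fin m) ℝ) (β : ℝ) :
    Matrix (Fin m ⊕ Fin m) (Fin m ⊕ Fin m) ℝ :=
  fromBlocks (B * Bᵀ + β ^ 2 • vecMulVec (eLast m) (eLast m)) 0 0 (Bᵀ * B)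

noncomputable def colSpanE {M N m : ℕ} (P : Matrix (Fin M) (Fin m) ℝ)
    (Q : Matrix (Fin N) (Fin m) ℝ) : Submodule ℝ (EuclideanSpace ℝ (Fin M ⊕ Fin N)) :=
  Submodule.span ℝ {z | ∃ x y : Fin m → ℝ, z = toE (Sum.elim (P.mulVec x) (Q.mulVec y))}

noncomputable def Mrho {m : ℕ} (B : Matrix (Fin m) (Fin m) ℝ) (β ρ : ℝ) :
    Matrix ((Fin m ⊕ Fin m) ⊕ Unit) (Fin m ⊕ Fin m) ℝ :=
  Matrix.fromRows
    (fromBlocks (-(ρ • (1 : Matrix (Fin m) (Fin m) ℝ))) B Bᵀ (-(ρ • 1)))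
    (Matrix.of fun (_ : Unit) j => Sum.elim (β • eLast m) (0 : Fin m → ℝ) j)

/-! Since `1 - U Uᵀ` is an orthogonal projector,
`Bᵀ B - (Uᵀ B)ᵀ (Uᵀ B) = ((1 - U Uᵀ) B)ᵀ ((1 - U Uᵀ) B)`; taking `B = A V`, and `B = Aᵀ U` with the
roles of `U` and `V` exchanged, gives both semidefiniteness claims. They bound the two quadratic
forms below by `‖C h‖²` and `‖Cᵀ h‖²`, where `C = Uᵀ A V`. The first is at least `σ_min(C)² ‖h‖²`
by definition of `σ_min`, and so is the second because `C` is square, hence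
`σ_min(Cᵀ) ≥ σ_min(C)`. -/

namespace Matrix

variable {m n k R : Type*} [Fintype m] [Fintype n] [Fintype k]
  [Ring R] [PartialOrder R] [StarRing R] [StarOrderedRing R]

theorem posSemidef_conjTranspose_mul_self_sub_of_orthonormal [DecidableEq m] [DecidableEq k]
    {U : Matrix m k R} (hU : Uᴴ * U = 1) (B : Matrix m n R) :
    (Bᴴ * B - (Uᴴ * B)ᴴ * (Uᴴ * B)).PosSemidef := by
  have hUUB : Uᴴ * (U * (Uᴴ * B)) = Uᴴ * B := by rw [← Matrix.mul_assoc, hU, Matrix.one_mul]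
  convert posSemidef_conjTranspose_mul_self ((1 - U * Uᴴ) * B) using 1
  simp only [conjTranspose_mul, conjTranspose_sub, conjTranspose_conjTranspose,
    Matrix.mul_sub, Matrix.sub_mul, Matrix.one_mul, Matrix.mul_assoc, hUUB]
  abel

end Matrix

section euclNorm

variable {ι m n : Type*} [Fintype ι] [Fintype m] [Fintype n]

theorem euclNorm_nonneg (v : ι → ℝ) : 0 ≤ euclNorm v := Real.sqrt_nonneg _

theorem euclNorm_sq (v : ι → ℝ) : euclNorm v ^ 2 = v ⬝ᵥ v := by
  rw [euclNorm, Real.sq_sqrt (Finset.sum_nonneg fun i _ => sq_nonneg _)]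
  simp only [dotProduct, sq]

theorem euclNorm_eq_zero {v : ι → ℝ} : euclNorm v = 0 ↔ v = 0 := by
  rw [← sq_eq_zero_iff, euclNorm_sq, dotProduct_self_eq_zero]

theorem dotProduct_le_euclNorm_mul_euclNorm (x y : ι → ℝ) : x ⬝ᵥ y ≤ euclNorm x * euclNorm y := by
  simpa [PiLp.inner_apply, EuclideanSpace.norm_eq, euclNorm, dotProduct, Real.norm_eq_abs,
    sq_abs, mul_comm] using real_inner_le_norm (WithLp.toLp 2 x) (WithLp.toLp 2 y)

theorem dotProduct_transpose_mul_self_mulVec (C : Matrix m n ℝ) (h : n → ℝ) :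
    h ⬝ᵥ (Cᵀ * C) *ᵥ h = euclNorm (C *ᵥ h) ^ 2 := by
  rw [euclNorm_sq, ← mulVec_mulVec, dotProduct_mulVec, vecMul_transpose]

end euclNorm

section sigmaMin

variable {m n : Type*} [Fintype m] [Fintype n]

theorem sigmaMin_nonneg (C : Matrix m n ℝ) : 0 ≤ sigmaMin C :=
  Real.sSup_nonneg fun _ hc => hc.1

theorem sigmaMin_mul_euclNorm_le (C : Matrix m n ℝ) (h : n → ℝ) :
    sigmaMin C * euclNorm h ≤ euclNorm (C *ᵥ h) := by
  rcases (euclNorm_nonneg h).eq_or_lt with h0 | h0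
  · rw [← h0, mul_zero]
    exact euclNorm_nonneg _
  rw [← le_div_iff₀ h0]
  exact Real.sSup_le (fun c hc => (le_div_iff₀ h0).2 (hc.2 h))
    (div_nonneg (euclNorm_nonneg _) h0.le)

theorem mulVec_injective_of_mul_euclNorm_le {C : Matrix m n ℝ} {c : ℝ} (hc : 0 < c)
    (hC : ∀ g, c * euclNorm g ≤ euclNorm (C *ᵥ g)) : Function.Injective C.mulVec := by
  intro g₁ g₂ heq
  have h := hC (g₁ - g₂)
  rw [mulVec_sub, heq, sub_self, euclNorm_eq_zero.2 rfl] at h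
  have : euclNorm (g₁ - g₂) = 0 :=
    le_antisymm (nonpos_of_mul_nonpos_right h hc) (euclNorm_nonneg _)
  exact sub_eq_zero.1 (euclNorm_eq_zero.1 this)

/-- For square `C`, write `h = C g`; then `‖h‖² = ⟪Cᵀ h, g⟫ ≤ ‖Cᵀ h‖ ‖g‖ ≤ ‖Cᵀ h‖ ‖h‖ / c`. -/
theorem mul_euclNorm_le_euclNorm_transpose_mulVec [DecidableEq n] {C : Matrix n n ℝ} {c : ℝ}
    (hc : 0 ≤ c) (hC : ∀ g, c * euclNorm g ≤ euclNorm (C *ᵥ g)) (h : n → ℝ) :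
    c * euclNorm h ≤ euclNorm (Cᵀ *ᵥ h) := by
  rcases hc.eq_or_lt with rfl | hc
  · simpa using euclNorm_nonneg (Cᵀ *ᵥ h)
  have hsurj := mulVec_surjective_iff_isUnit.2
    (mulVec_injective_iff_isUnit.1 (mulVec_injective_of_mul_euclNorm_le hc hC))
  obtain ⟨g, rfl⟩ := hsurj h
  have hsq : euclNorm (C *ᵥ g) ^ 2 ≤ euclNorm (Cᵀ *ᵥ (C *ᵥ g)) * euclNorm g := by
    rw [← dotProduct_transpose_mul_self_mulVec, ← mulVec_mulVec, dotProduct_comm]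
    exact dotProduct_le_euclNorm_mul_euclNorm _ _
  have hprod : c * euclNorm (C *ᵥ g) * euclNorm (C *ᵥ g) ≤
      euclNorm (Cᵀ *ᵥ (C *ᵥ g)) * euclNorm (C *ᵥ g) := by
    nlinarith [mul_le_mul_of_nonneg_left (hC g) (euclNorm_nonneg (Cᵀ *ᵥ (C *ᵥ g)))]
  rcases (euclNorm_nonneg (C *ᵥ g)).eq_or_lt with h0 | h0
  · rw [← h0, mul_zero]
    exact euclNorm_nonneg _
  · exact le_of_mul_le_mul_right hprod h0

theorem sq_mul_euclNorm_sq_le_dotProduct_mulVec {G : Matrix n n ℝ} {C : Matrix m n ℝ}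
    (hG : (G - Cᵀ * C).PosSemidef) {c : ℝ} (hc : 0 ≤ c) {h : n → ℝ}
    (hCh : c * euclNorm h ≤ euclNorm (C *ᵥ h)) :
    c ^ 2 * euclNorm h ^ 2 ≤ h ⬝ᵥ G *ᵥ h := by
  have hGh := hG.dotProduct_mulVec_nonneg h
  rw [star_trivial, sub_mulVec, dotProduct_sub, dotProduct_transpose_mul_self_mulVec] at hGh
  nlinarith [mul_nonneg hc (euclNorm_nonneg h)]

end sigmaMin

theorem stmt11 (M N l : ℕ) (A : Matrix (Fin M) (Fin N) ℝ)
    (U : Matrix (Fin M) (Fin l) ℝ) (V : Matrix (Fin N) (Fin l) ℝ)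
    (hU : Uᵀ * U = 1) (hV : Vᵀ * V = 1) :
    (Vᵀ * Aᵀ * A * V - (Uᵀ * A * V)ᵀ * (Uᵀ * A * V)).PosSemidef ∧
    (Uᵀ * A * Aᵀ * U - (Uᵀ * A * V) * (Uᵀ * A * V)ᵀ).PosSemidef ∧
    ∀ h : Fin l → ℝ,
      sigmaMin (Uᵀ * A * V) ^ 2 * euclNorm h ^ 2 ≤ h ⬝ᵥ (Vᵀ * Aᵀ * A * V).mulVec h ∧
      sigmaMin (Uᵀ * A * V) ^ 2 * euclNorm h ^ 2 ≤ h ⬝ᵥ (Uᵀ * A * Aᵀ * U).mulVec h := by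
  set C := Uᵀ * A * V
  have hVAAV : (Vᵀ * Aᵀ * A * V - Cᵀ * C).PosSemidef := by
    simpa [C, conjTranspose_eq_transpose_of_trivial, transpose_mul, Matrix.mul_assoc] using
      posSemidef_conjTranspose_mul_self_sub_of_orthonormal (U := U) (by simpa using hU) (A * V)
  have hUAAU : (Uᵀ * A * Aᵀ * U - Cᵀᵀ * Cᵀ).PosSemidef := by
    simpa [C, conjTranspose_eq_transpose_of_trivial, transpose_mul, Matrix.mul_assoc] using
      posSemidef_conjTranspose_mul_self_sub_of_orthonormal (U := V) (by simpa using hV) (Aᵀ * U)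
  refine ⟨hVAAV, by simpa using hUAAU, fun h => ⟨?_, ?_⟩⟩
  · exact sq_mul_euclNorm_sq_le_dotProduct_mulVec hVAAV (sigmaMin_nonneg C)
      (sigmaMin_mul_euclNorm_le C h)
  · exact sq_mul_euclNorm_sq_le_dotProduct_mulVec hUAAU (sigmaMin_nonneg C)
      (mul_euclNorm_le_euclNorm_transpose_mulVec (sigmaMin_nonneg C)
        (sigmaMin_mul_euclNorm_le C) h)
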